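/- arXiv:2212.09309 — 4 statements merged into one kernel-verified Lean document; each statement's English description precedes it below -/
import Mathlib

section
/- Let i ≥ 1, let R' ⊆ ℝ^{i−1} be a connected set, and let p ∈ ℝ[x₁,…,x_{i−1}][x_i] be delineable on R' with real root functions θ₁ < ⋯ < θ_k. Suppose that p, viewed as a polynomial in ℝ[x₁,…,x_i], is order-invariant on each p-section {(r, θ_j(r)) : r ∈ R'} for j = 1,…,k. Let R ⊆ R' × ℝ be a connected set on which p is sign-invariant, and suppose there exists s ∈ R with p(s) = 0. Then p is order-invariant on R. -/
noncomputable section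

open Polynomial

/-- Evaluate the coefficients of `p ∈ ℝ[x₁,…,xₙ][x]` at the point `r ∈ ℝⁿ`:
this is the univariate real polynomial `p(r,·)`. -/
def evalAt {n : ℕ} (r : Fin n → ℝ) (p : Polynomial (MvPolynomial (Fin n) ℝ)) :
    Polynomial ℝ :=
  p.map (MvPolynomial.eval r)

/-- `p` is nullified at `r` if `p(r,·)` is the zero polynomial. -/
def NullifiedAt {n : ℕ} (p : Polynomial (MvPolynomial (Fin n) ℝ)) (r : Fin n → ℝ) : Prop :=
  evalAt r p = 0

/-- Iterated partial derivative of a multivariate polynomial, differentiating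
successively with respect to the variables in the list `l` (a mixed partial
derivative of total order `l.length`). -/
def iterPDeriv {n : ℕ} (l : List (Fin n)) (p : MvPolynomial (Fin n) ℝ) :
    MvPolynomial (Fin n) ℝ :=
  l.foldr (fun i q => MvPolynomial.pderiv i q) p

/-- The order of a multivariate polynomial at a point: the least `k ∈ ℕ` such
that some partial derivative of `p` of total order `k` does not vanish at `r`
(`⊤ = ∞` if there is no such `k`). -/
def orderAt {n : ℕ} (p : MvPolynomial (Fin n) ℝ) (r : Fin n → ℝ) : ℕ∞ :=
  sInf {k : ℕ∞ | ∃ l : List (Fin n), (l.length : ℕ∞) = k ∧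
    MvPolynomial.eval r (iterPDeriv l p) ≠ 0}

/-- `p` is order-invariant on `R`: `ord_r(p) = ord_{r'}(p)` for all `r, r' ∈ R`. -/
def OrderInvariantOn {n : ℕ} (p : MvPolynomial (Fin n) ℝ) (R : Set (Fin n → ℝ)) : Prop :=
  ∀ r ∈ R, ∀ r' ∈ R, orderAt p r = orderAt p r'

/-- `p` is sign-invariant on `R`: `sgn(p(r)) = sgn(p(r'))` for all `r, r' ∈ R`. -/
def SignInvariantOn {n : ℕ} (p : MvPolynomial (Fin n) ℝ) (R : Set (Fin n → ℝ)) : Prop :=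
  ∀ r ∈ R, ∀ r' ∈ R, Real.sign (MvPolynomial.eval r p) = Real.sign (MvPolynomial.eval r' p)

/-- View `p ∈ ℝ[x₁,…,xₙ][x]` as an element of `ℝ[x₁,…,xₙ,x]`, a multivariate
polynomial in `n+1` variables, the main variable `x` being the variable of
index `0`.  A point `(r, y) ∈ ℝⁿ × ℝ` corresponds to the point
`Fin.cons y r ∈ ℝ^{n+1}`. -/
def toMv {n : ℕ} (p : Polynomial (MvPolynomial (Fin n) ℝ)) : MvPolynomial (Fin (n + 1)) ℝ :=
  (MvPolynomial.finSuccEquiv ℝ n).symm p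

/-- The Sylvester matrix of two univariate polynomials over a commutative ring:
`q.natDegree` rows of shifted coefficients of `p` followed by `p.natDegree`
rows of shifted coefficients of `q`. -/
def sylvesterMatrix {A : Type*} [CommRing A] (p q : Polynomial A) :
    Matrix (Fin (q.natDegree + p.natDegree)) (Fin (q.natDegree + p.natDegree)) A :=
  Matrix.of fun i j =>
    if (i : ℕ) < q.natDegree then
      -- row of coefficients of `p`, shifted by `i`
      if (i : ℕ) ≤ (j : ℕ) ∧ (j : ℕ) ≤ (i : ℕ) + p.natDegree then
        p.coeff (p.natDegree + i - j)
      else 0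
    else
      -- row of coefficients of `q`, shifted by `i - q.natDegree`
      if (i : ℕ) - q.natDegree ≤ (j : ℕ) ∧ (j : ℕ) ≤ (i : ℕ) - q.natDegree + q.natDegree then
        q.coeff (q.natDegree + ((i : ℕ) - q.natDegree) - j)
      else 0

/-- The resultant of two univariate polynomials: the determinant of their
Sylvester matrix. -/
def resultant {A : Type*} [CommRing A] (p q : Polynomial A) : A :=
  (sylvesterMatrix p q).det

/-- Truncation: keep the first `d` coordinates, set the others to `0`. -/
def zeroAfter (d : ℕ) {n : ℕ} (y : Fin n → ℝ) : Fin n → ℝ :=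
  fun j => if (j : ℕ) < d then y j else 0

/-- `(U, V, φ, ψ)` is an analytic chart at `r` exhibiting `R` locally as the
`d`-dimensional coordinate subspace: `U` is an open neighborhood of `r`, `V` is
open, `φ : U → V` is a bijection (with inverse `ψ`), `φ` and `ψ` are
real-analytic, and `φ(R ∩ U) = {y ∈ V : y_{d+1} = ⋯ = y_n = 0}`. -/
def IsAnalyticChartAt (d : ℕ) {n : ℕ} (R : Set (Fin n → ℝ)) (r : Fin n → ℝ)
    (U V : Set (Fin n → ℝ)) (φ ψ : (Fin n → ℝ) → (Fin n → ℝ)) : Prop :=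
  IsOpen U ∧ r ∈ U ∧ IsOpen V ∧
  AnalyticOnNhd ℝ φ U ∧ AnalyticOnNhd ℝ ψ V ∧
  Set.MapsTo φ U V ∧ Set.MapsTo ψ V U ∧
  (∀ x ∈ U, ψ (φ x) = x) ∧ (∀ y ∈ V, φ (ψ y) = y) ∧
  φ '' (R ∩ U) = {y ∈ V | ∀ j : Fin n, d ≤ (j : ℕ) → y j = 0}

/-- `R ⊆ ℝⁿ` is a `d`-dimensional analytic submanifold. -/
def IsAnalyticSubmanifold (d : ℕ) {n : ℕ} (R : Set (Fin n → ℝ)) : Prop :=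
  ∀ r ∈ R, ∃ U V φ ψ, IsAnalyticChartAt d R r U V φ ψ

/-- `θ` is analytic on the `d`-dimensional analytic submanifold `R`: around
every point of `R` there is an analytic chart for which the local
representation `(y₁,…,y_d) ↦ θ(φ⁻¹(y₁,…,y_d,0,…,0))` of `θ` is real-analytic
on its open domain. -/
def AnalyticOnSubmanifold (d : ℕ) {n : ℕ} (R : Set (Fin n → ℝ))
    (θ : (Fin n → ℝ) → ℝ) : Prop :=
  ∀ r ∈ R, ∃ U V φ ψ, IsAnalyticChartAt d R r U V φ ψ ∧
    AnalyticOnNhd ℝ (fun y => θ (ψ (zeroAfter d y))) {y | zeroAfter d y ∈ V}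

/-- `θ`, `m` form a system of `k` continuous real root functions (pointwise
strictly increasing in the index) with constant multiplicities, witnessing the
delineability of `p` on `R`: for every `r ∈ R` the real roots of `p(r,·)` are
exactly `θ 0 r, …, θ (k-1) r`, the root `θ j r` having multiplicity `m j`. -/
def IsRootSystem {n : ℕ} (p : Polynomial (MvPolynomial (Fin n) ℝ))
    (R : Set (Fin n → ℝ)) (k : ℕ) (θ : Fin k → (Fin n → ℝ) → ℝ) (m : Fin k → ℕ) : Prop :=
  (∀ j, ContinuousOn (θ j) R) ∧
  (∀ r ∈ R, ∀ j j' : Fin k, j < j' → θ j r < θ j' r) ∧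
  (∀ j, 0 < m j) ∧
  (∀ r ∈ R, ∀ y : ℝ, (evalAt r p).IsRoot y ↔ ∃ j, θ j r = y) ∧
  (∀ r ∈ R, ∀ j, (evalAt r p).rootMultiplicity (θ j r) = m j)

/-- `p` is delineable on `R`. -/
def DelineableOn {n : ℕ} (p : Polynomial (MvPolynomial (Fin n) ℝ))
    (R : Set (Fin n → ℝ)) : Prop :=
  ∃ k θ m, IsRootSystem p R k θ m

/-- Analytic analogue of `IsRootSystem`, where the root functions are analytic
on the `d`-dimensional analytic submanifold `R`; this witnesses the analytic
delineability of `p` on `R`, and the `θ j` are the analytic root functions. -/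
def IsAnalyticRootSystem (d : ℕ) {n : ℕ} (p : Polynomial (MvPolynomial (Fin n) ℝ))
    (R : Set (Fin n → ℝ)) (k : ℕ) (θ : Fin k → (Fin n → ℝ) → ℝ) (m : Fin k → ℕ) : Prop :=
  (∀ j, AnalyticOnSubmanifold d R (θ j)) ∧
  (∀ r ∈ R, ∀ j j' : Fin k, j < j' → θ j r < θ j' r) ∧
  (∀ j, 0 < m j) ∧
  (∀ r ∈ R, ∀ y : ℝ, (evalAt r p).IsRoot y ↔ ∃ j, θ j r = y) ∧
  (∀ r ∈ R, ∀ j, (evalAt r p).rootMultiplicity (θ j r) = m j)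

/-- `p` is analytically delineable on the `d`-dimensional analytic
submanifold `R`. -/
def AnalyticallyDelineableOn (d : ℕ) {n : ℕ} (p : Polynomial (MvPolynomial (Fin n) ℝ))
    (R : Set (Fin n → ℝ)) : Prop :=
  ∃ k θ m, IsAnalyticRootSystem d p R k θ m

/-- The order of a function at a point: the least `m ∈ ℕ` such that the `m`-th
iterated Fréchet derivative of `h` at `x` is nonzero (`⊤ = ∞` if all iterated
derivatives of `h` vanish at `x`). -/
def fnOrderAt {n : ℕ} (h : (Fin n → ℝ) → ℝ) (x : Fin n → ℝ) : ℕ∞ :=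
  sInf {m : ℕ∞ | ∃ k : ℕ, (k : ℕ∞) = m ∧ iteratedFDeriv ℝ k h x ≠ 0}

/-- Let `R' ⊆ ℝ^{i-1}` be connected (here `i = n+1`), and let
`p ∈ ℝ[x₁,…,x_{i-1}][x_i]` be delineable on `R'` with real root functions
`θ 0 < ⋯ < θ (k-1)`.  Suppose `p`, viewed in `ℝ[x₁,…,x_i]`, is order-invariant
on each `p`-section over `R'`.  If `R ⊆ R' × ℝ` is connected, `p` is
sign-invariant on `R`, and `p(s) = 0` for some `s ∈ R`, then `p` is
order-invariant on `R`. -/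
theorem orderInvariant_of_signInvariant_of_section_orderInvariant
    (n : ℕ) (R' : Set (Fin n → ℝ)) (hR' : IsConnected R')
    (p : Polynomial (MvPolynomial (Fin n) ℝ))
    (k : ℕ) (θ : Fin k → (Fin n → ℝ) → ℝ) (mult : Fin k → ℕ)
    (hsys : IsRootSystem p R' k θ mult)
    (hsec : ∀ j : Fin k, ∀ r ∈ R', ∀ r' ∈ R',
      orderAt (toMv p) (Fin.cons (θ j r) r) = orderAt (toMv p) (Fin.cons (θ j r') r'))
    (R : Set ((Fin n → ℝ) × ℝ)) (hRsub : ∀ x ∈ R, x.1 ∈ R') (hR : IsConnected R)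
    (hsign : ∀ x ∈ R, ∀ x' ∈ R,
      Real.sign (MvPolynomial.eval (Fin.cons x.2 x.1) (toMv p)) =
        Real.sign (MvPolynomial.eval (Fin.cons x'.2 x'.1) (toMv p)))
    (s : (Fin n → ℝ) × ℝ) (hsR : s ∈ R)
    (hps : MvPolynomial.eval (Fin.cons s.2 s.1) (toMv p) = 0) :
    ∀ x ∈ R, ∀ x' ∈ R,
      orderAt (toMv p) (Fin.cons x.2 x.1) = orderAt (toMv p) (Fin.cons x'.2 x'.1) := by
  obtain ⟨hcont, hmono, hmpos, hroot, hmultx⟩ := hsys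
  have heval : ∀ (r : Fin n → ℝ) (y : ℝ),
      MvPolynomial.eval (Fin.cons y r) (toMv p) = (evalAt r p).eval y := by
    intro r y
    rw [MvPolynomial.eval_eq_eval_mv_eval', toMv, evalAt,
      AlgEquiv.apply_symm_apply]
  have hzero : ∀ x ∈ R, (evalAt x.1 p).eval x.2 = 0 := by
    intro x hx
    have h1 := hsign x hx s hsR
    rw [hps, Real.sign_zero] at h1
    have h2 := Real.sign_eq_zero_iff.mp h1
    rwa [heval] at h2
  have hjx : ∀ x ∈ R, ∃ j, θ j x.1 = x.2 := fun x hx =>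
    (hroot x.1 (hRsub x hx) x.2).mp (hzero x hx)
  obtain ⟨j0, hj0⟩ := hjx s hsR
  haveI : PreconnectedSpace R := Subtype.preconnectedSpace hR.isPreconnected
  have hclosed : ∀ j : Fin k,
      IsClosed {x : R | θ j (x : (Fin n → ℝ) × ℝ).1 = (x : (Fin n → ℝ) × ℝ).2} := by
    intro j
    have hc : Continuous fun x : R => θ j (x : (Fin n → ℝ) × ℝ).1 :=
      (hcont j).comp_continuous (continuous_fst.comp continuous_subtype_val)
        (fun x => hRsub x x.2)
    exact isClosed_eq hc (continuous_snd.comp continuous_subtype_val)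
  set A : Set R := {x : R | θ j0 (x : (Fin n → ℝ) × ℝ).1 = (x : (Fin n → ℝ) × ℝ).2} with hA
  have hopen : IsOpen A := by
    have hcompl : Aᶜ = ⋃ j ∈ ({j0}ᶜ : Set (Fin k)),
        {x : R | θ j (x : (Fin n → ℝ) × ℝ).1 = (x : (Fin n → ℝ) × ℝ).2} := by
      ext x
      simp only [hA, Set.mem_compl_iff, Set.mem_iUnion, Set.mem_setOf_eq,
        Set.mem_singleton_iff, exists_prop]
      constructor
      · intro hne
        obtain ⟨j, hj⟩ := hjx x x.2
        exact ⟨j, fun hjj => hne (by rw [hjj] at hj; exact hj), hj⟩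
      · rintro ⟨j, hjne, hj⟩ h
        rcases lt_or_gt_of_ne (Ne.symm hjne) with hlt | hlt
        · have := hmono _ (hRsub x x.2) _ _ hlt
          rw [hj, h] at this; exact lt_irrefl _ this
        · have := hmono _ (hRsub x x.2) _ _ hlt
          rw [hj, h] at this; exact lt_irrefl _ this
    rw [← isClosed_compl_iff, hcompl]
    exact Set.Finite.isClosed_biUnion (Set.toFinite _) (fun j _ => hclosed j)
  have hAuniv : A = Set.univ := by
    rcases isClopen_iff.mp ⟨hclosed j0, hopen⟩ with h | h
    · exfalso
      have : (⟨s, hsR⟩ : R) ∈ A := hj0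
      rw [hA, h] at this
      exact this
    · exact h
  have hall : ∀ x ∈ R, θ j0 x.1 = x.2 := by
    intro x hx
    have : (⟨x, hx⟩ : R) ∈ A := hAuniv ▸ Set.mem_univ _
    exact this
  intro x hx x' hx'
  rw [← hall x hx, ← hall x' hx']
  exact hsec j0 x.1 (hRsub x hx) x'.1 (hRsub x' hx')
end
end

section
/- Let i ≥ 1, let R ⊆ ℝ^i, let s ∈ R, and let p ∈ ℝ[x₁,…,x_i][x] with deg_x(p) ≥ 2. Set D = res_x(p, ∂p/∂x) ∈ ℝ[x₁,…,x_i], the resultant of p with its derivative with respect to the main variable x. If D(s) ≠ 0 and D is sign-invariant on R, then p is not nullified at any point of R, i.e. p(r,·) is not the zero polynomial for every r ∈ R. -/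
noncomputable section

open Polynomial

theorem map_resultant_eq_zero_of_map_eq_zero {A B : Type*} [CommRing A] [CommRing B]
    (f : A →+* B) {p q : Polynomial A} (hp : p.map f = 0) (hq : q.map f = 0)
    (hdeg : 0 < q.natDegree + p.natDegree) : f (_root_.resultant p q) = 0 := by
  rw [_root_.resultant, RingHom.map_det]
  refine Matrix.det_eq_zero_of_row_eq_zero ⟨0, hdeg⟩ fun j => ?_
  simp only [RingHom.mapMatrix_apply, Matrix.map_apply, sylvesterMatrix, Matrix.of_apply]
  split_ifs <;> simp only [← coeff_map, hp, hq, coeff_zero, map_zero]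

theorem NullifiedAt.derivative {n : ℕ} {p : Polynomial (MvPolynomial (Fin n) ℝ)}
    {r : Fin n → ℝ} (h : NullifiedAt p r) : NullifiedAt (derivative p) r := by
  rw [NullifiedAt, evalAt, ← derivative_map]
  exact (congrArg _ h).trans derivative_zero

theorem SignInvariantOn.eval_eq_zero {n : ℕ} {D : MvPolynomial (Fin n) ℝ}
    {R : Set (Fin n → ℝ)} (hD : SignInvariantOn D R) {r s : Fin n → ℝ} (hr : r ∈ R)
    (hs : s ∈ R) (h : MvPolynomial.eval r D = 0) : MvPolynomial.eval s D = 0 := by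
  rw [← Real.sign_eq_zero_iff, hD s hs r hr, h, Real.sign_zero]

theorem not_nullified_of_discriminant_signInvariant_general
    (i : ℕ) (R : Set (Fin i → ℝ)) (s : Fin i → ℝ) (hs : s ∈ R)
    (p : Polynomial (MvPolynomial (Fin i) ℝ)) (hdeg : 2 ≤ p.natDegree)
    (hDs : MvPolynomial.eval s (_root_.resultant p (Polynomial.derivative p)) ≠ 0)
    (hDinv : SignInvariantOn (_root_.resultant p (Polynomial.derivative p)) R) :
    ∀ r ∈ R, ¬ NullifiedAt p r := by
  intro r hr hnull
  -- A nullified `p` kills a whole row of the Sylvester matrix, so `D(r) = 0`.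
  have hDr : MvPolynomial.eval r (_root_.resultant p (Polynomial.derivative p)) = 0 :=
    map_resultant_eq_zero_of_map_eq_zero _ hnull hnull.derivative (by omega)
  exact hDs (hDinv.eval_eq_zero hr hs hDr)

/-- Let `R ⊆ ℝ^i` (`i ≥ 1`), `s ∈ R`, and
`p ∈ ℝ[x₁,…,x_i][x]` with `deg_x(p) ≥ 2`.  Set `D = res_x(p, ∂p/∂x)`.  If
`D(s) ≠ 0` and `D` is sign-invariant on `R`, then `p` is not nullified at any
point of `R`. -/
theorem not_nullified_of_discriminant_signInvariant
    (i : ℕ) (hi : 1 ≤ i) (R : Set (Fin i → ℝ)) (s : Fin i → ℝ) (hs : s ∈ R)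
    (p : Polynomial (MvPolynomial (Fin i) ℝ)) (hdeg : 2 ≤ p.natDegree)
    (hDs : MvPolynomial.eval s (_root_.resultant p (Polynomial.derivative p)) ≠ 0)
    (hDinv : SignInvariantOn (_root_.resultant p (Polynomial.derivative p)) R) :
    ∀ r ∈ R, ¬ NullifiedAt p r :=
  not_nullified_of_discriminant_signInvariant_general i R s hs p hdeg hDs hDinv
end
end

section
/- Let i ≥ 1, let R' ⊆ ℝ^{i−1} be a connected set, and let p ∈ ℝ[x₁,…,x_{i−1}][x_i] be delineable on R'. If there exists s ∈ R' such that the univariate polynomial p(s,·) has no real roots, then p(r, y) ≠ 0 for every r ∈ R' and every y ∈ ℝ; in particular p, viewed as a polynomial in ℝ[x₁,…,x_i], is sign-invariant on R' × ℝ. -/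
noncomputable section

open Polynomial

/-- Let `R' ⊆ ℝ^{i-1}` be connected (here `i = n+1`) and let
`p ∈ ℝ[x₁,…,x_{i-1}][x_i]` be delineable on `R'`.  If for some `s ∈ R'` the
univariate polynomial `p(s,·)` has no real roots, then `p(r,y) ≠ 0` for all
`r ∈ R'` and `y ∈ ℝ`; in particular `p`, viewed in `ℝ[x₁,…,x_i]`, is
sign-invariant on `R' × ℝ`. -/
theorem signInvariant_of_delineable_of_no_roots
    (n : ℕ) (R' : Set (Fin n → ℝ)) (hR' : IsConnected R')
    (p : Polynomial (MvPolynomial (Fin n) ℝ)) (hdel : DelineableOn p R')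
    (s : Fin n → ℝ) (hs : s ∈ R')
    (hnoroot : ∀ y : ℝ, Polynomial.eval y (evalAt s p) ≠ 0) :
    (∀ r ∈ R', ∀ y : ℝ, Polynomial.eval y (evalAt r p) ≠ 0) ∧
    (∀ r ∈ R', ∀ y : ℝ, ∀ r' ∈ R', ∀ y' : ℝ,
      Real.sign (MvPolynomial.eval (Fin.cons y r) (toMv p)) =
        Real.sign (MvPolynomial.eval (Fin.cons y' r') (toMv p))) := by
  obtain ⟨k, θ, m, hcont, hlt, hm, hroot, hmul⟩ := hdel
  have h1 : ∀ r ∈ R', ∀ y : ℝ, Polynomial.eval y (evalAt r p) ≠ 0 := by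
    intro r hr y hy
    obtain ⟨j, hj⟩ := (hroot r hr y).mp hy
    exact hnoroot (θ j s) ((hroot s hs (θ j s)).mpr ⟨j, rfl⟩)
  refine ⟨h1, ?_⟩
  have hkey : ∀ (r : Fin n → ℝ) (y : ℝ),
      MvPolynomial.eval (Fin.cons y r) (toMv p) = Polynomial.eval y (evalAt r p) := by
    intro r y
    rw [MvPolynomial.eval_eq_eval_mv_eval']
    simp [toMv, evalAt]
  set g : ((Fin n → ℝ) × ℝ) → ℝ := fun q => MvPolynomial.eval (Fin.cons q.2 q.1) (toMv p)
    with hg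
  have hgcont : Continuous g := by
    have hc : Continuous (fun q : (Fin n → ℝ) × ℝ => (Fin.cons q.2 q.1 : Fin (n + 1) → ℝ)) := by
      apply continuous_pi
      intro i
      refine Fin.cases ?_ ?_ i
      · simpa using continuous_snd
      · intro j
        simpa using (by have hcj : Continuous fun a : (Fin n → ℝ) × ℝ => a.1 j := (continuous_apply j).comp continuous_fst; exact hcj : Continuous fun a : (Fin n → ℝ) × ℝ => a.1 j)
    exact (MvPolynomial.continuous_eval (toMv p)).comp hc
  set S : Set ((Fin n → ℝ) × ℝ) := R' ×ˢ (Set.univ : Set ℝ) with hS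
  have hScon : IsPreconnected S := (hR'.prod ⟨⟨0, Set.mem_univ 0⟩, isPreconnected_univ⟩).isPreconnected
  have hne : ∀ x ∈ S, g x ≠ 0 := by
    rintro ⟨r, y⟩ ⟨hr, -⟩
    rw [hg]; dsimp only; rw [hkey]
    exact h1 r hr y
  have hsign : ∀ x ∈ S, ∀ x' ∈ S, Real.sign (g x) = Real.sign (g x') := by
    intro x hx x' hx'
    rcases lt_trichotomy (g x) 0 with h | h | h
    · rcases lt_trichotomy (g x') 0 with h' | h' | h'
      · rw [Real.sign_of_neg h, Real.sign_of_neg h']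
      · exact absurd h' (hne x' hx')
      · have : (0 : ℝ) ∈ Set.Icc (g x) (g x') := ⟨h.le, h'.le⟩
        obtain ⟨c, hc, hc0⟩ := hScon.intermediate_value hx hx' hgcont.continuousOn this
        exact absurd hc0 (hne c hc)
    · exact absurd h (hne x hx)
    · rcases lt_trichotomy (g x') 0 with h' | h' | h'
      · have : (0 : ℝ) ∈ Set.Icc (g x') (g x) := ⟨h'.le, h.le⟩
        obtain ⟨c, hc, hc0⟩ := hScon.intermediate_value hx' hx hgcont.continuousOn this
        exact absurd hc0 (hne c hc)
      · exact absurd h' (hne x' hx')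
      · rw [Real.sign_of_pos h, Real.sign_of_pos h']
  intro r hr y r' hr' y'
  exact hsign (r, y) ⟨hr, trivial⟩ (r', y') ⟨hr', trivial⟩
end
end

section
/- Let U ⊆ ℝ^n be open, let f, g : U → ℝ be real-analytic on U, and let S ⊆ U be a connected set. Define the order of a function h at x ∈ U as ord_x(h) = min{m ∈ ℕ : the m-th iterated Fréchet derivative of h at x is nonzero} (with ord_x(h) = ∞ if all iterated derivatives of h vanish at x). If ord_x(f·g) is finite and takes the same value at every point x ∈ S, then ord_x(f) takes the same value at every point x ∈ S, and likewise ord_x(g) takes the same value at every point x ∈ S. -/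
noncomputable section

open Polynomial

section AuxOrderLemmas

open Filter Function FormalMultilinearSeries
open scoped ENNReal NNReal Topology

variable {E : Type} [NormedAddCommGroup E] [NormedSpace ℝ E]


variable {E : Type} [NormedAddCommGroup E] [NormedSpace ℝ E]

-- ENat helper
lemma enat_le_of_forall_lt {o₁ o₂ : ℕ∞} (h : ∀ m : ℕ, (m : ℕ∞) < o₁ → (m : ℕ∞) < o₂) :
    o₁ ≤ o₂ := by
  by_contra hlt
  push_neg at hlt
  lift o₂ to ℕ using hlt.ne_top with m
  exact absurd (h m hlt) (lt_irrefl _)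

-- Section 2: easy direction
lemma diag_coeff_eq_zero_of_iteratedFDeriv_eq_zero
    {F : Type} [NormedAddCommGroup F] [NormedSpace ℝ F] [CompleteSpace F]
    {f : E → F} {p : FormalMultilinearSeries ℝ E F} {x : E} {r : ℝ≥0∞}
    (h : HasFPowerSeriesOnBall f p x r) {k : ℕ}
    (hD : iteratedFDeriv ℝ k f x = 0) (y : E) : p k (fun _ => y) = 0 := by
  have := h.factorial_smul y k
  rw [hD] at this
  simp only [ContinuousMultilinearMap.zero_apply] at this
  have h2 : ((k.factorial : ℝ)) • p k (fun _ => y) = 0 := by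
    rw [Nat.cast_smul_eq_nsmul ℝ]; exact this
  rcases smul_eq_zero.mp h2 with h3 | h3
  · exact absurd h3 (by exact_mod_cast Nat.factorial_ne_zero k)
  · exact h3

-- derivSeries vanishing
lemma derivSeries_eq_zero_of_eq_zero
    {F : Type} [NormedAddCommGroup F] [NormedSpace ℝ F]
    {p : FormalMultilinearSeries ℝ E F} {j : ℕ} (hp : p (1 + j) = 0) :
    p.derivSeries j = 0 := by
  have hz : p.changeOriginSeries 1 j = 0 := by
    unfold FormalMultilinearSeries.changeOriginSeries
    apply Finset.sum_eq_zero
    intro s _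
    unfold FormalMultilinearSeries.changeOriginSeriesTerm
    rw [hp]
    exact (ContinuousMultilinearMap.curryFinFinset ℝ E F s.2 _).map_zero
  unfold FormalMultilinearSeries.derivSeries
  rw [ContinuousLinearMap.compFormalMultilinearSeries_apply, hz]
  ext v w
  simp

-- Hard direction core: induction
lemma iteratedFDeriv_eq_zero_of_series_eq_zero :
    ∀ (k : ℕ) {F : Type} [NormedAddCommGroup F] [NormedSpace ℝ F] [CompleteSpace F]
      {f : E → F} {p : FormalMultilinearSeries ℝ E F} {x : E} {r : ℝ≥0∞},
      HasFPowerSeriesOnBall f p x r → (∀ j ≤ k, p j = 0) → iteratedFDeriv ℝ k f x = 0 := by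
  intro k
  induction k with
  | zero =>
    intro F _ _ _ f p x r h hp
    rw [h.iteratedFDeriv_zero_apply_diag]
    exact hp 0 le_rfl
  | succ k ih =>
    intro F _ _ _ f p x r h hp
    have hd : HasFPowerSeriesOnBall (fderiv ℝ f) p.derivSeries x r := h.fderiv
    have hz : ∀ j ≤ k, p.derivSeries j = 0 := fun j hj =>
      derivSeries_eq_zero_of_eq_zero (hp (1 + j) (by omega))
    have h0 : iteratedFDeriv ℝ k (fderiv ℝ f) x = 0 := ih hd hz
    ext m
    rw [iteratedFDeriv_succ_apply_right, h0]
    simp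

-- Hard direction wrapper: only diagonal vanishing needed
lemma iteratedFDeriv_eq_zero_of_diag_eq_zero
    {f : E → ℝ} {p : FormalMultilinearSeries ℝ E ℝ} {x : E} {r : ℝ≥0∞}
    (h : HasFPowerSeriesOnBall f p x r) {m : ℕ}
    (hdiag : ∀ k ≤ m, ∀ y : E, p k (fun _ => y) = 0) :
    ∀ k ≤ m, iteratedFDeriv ℝ k f x = 0 := by
  set q : FormalMultilinearSeries ℝ E ℝ := fun k => if k ≤ m then 0 else p k with hq
  have hnorm : ∀ k, ‖q k‖ ≤ ‖p k‖ := by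
    intro k
    by_cases hk : k ≤ m <;> simp [hq, hk]
  have hrad : p.radius ≤ q.radius := radius_le_of_le hnorm
  have hball : HasFPowerSeriesOnBall f q x r := by
    refine ⟨h.r_le.trans hrad, h.r_pos, fun {y} hy => ?_⟩
    have := h.hasSum hy
    convert this using 2 with k
    by_cases hk : k ≤ m
    · simp [hq, hk, (hdiag k hk y).symm]
    · simp [hq, hk]
  intro k hk
  exact iteratedFDeriv_eq_zero_of_series_eq_zero k hball
    (fun j hj => by simp [hq, if_pos (hj.trans hk)])

-- Section 3: line series
def lineSeries (p : FormalMultilinearSeries ℝ E ℝ) (y : E) : FormalMultilinearSeries ℝ ℝ ℝ :=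
  fun k => ContinuousMultilinearMap.mkPiRing ℝ (Fin k) (p k (fun _ => y))

lemma lineSeries_coeff (p : FormalMultilinearSeries ℝ E ℝ) (y : E) (k : ℕ) :
    (lineSeries p y).coeff k = p k (fun _ => y) := by
  simp [FormalMultilinearSeries.coeff, lineSeries]

lemma lineSeries_apply (p : FormalMultilinearSeries ℝ E ℝ) (y : E) (k : ℕ) (t : ℝ) :
    (lineSeries p y) k (fun _ => t) = t ^ k * p k (fun _ => y) := by
  simp [lineSeries, smul_eq_mul]

lemma hasFPowerSeriesAt_line {f : E → ℝ} {p : FormalMultilinearSeries ℝ E ℝ} {x : E} {r : ℝ≥0∞}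
    (h : HasFPowerSeriesOnBall f p x r) (y : E) :
    HasFPowerSeriesAt (fun t : ℝ => f (x + t • y)) (lineSeries p y) 0 := by
  have hy1 : ((‖y‖₊ + 1 : ℝ≥0) : ℝ≥0∞) ≠ 0 := by simp
  have hy2 : ((‖y‖₊ + 1 : ℝ≥0) : ℝ≥0∞) ≠ ⊤ := by simp
  have hdiv : (0 : ℝ≥0∞) < r / (‖y‖₊ + 1) := ENNReal.div_pos h.r_pos.ne' hy2
  obtain ⟨ρ, hρ0, hρlt⟩ := ENNReal.lt_iff_exists_nnreal_btwn.mp hdiv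
  have hρ0' : 0 < ρ := by exact_mod_cast hρ0
  have hρr : (ρ : ℝ≥0∞) * (‖y‖₊ + 1) < r := ENNReal.mul_lt_of_lt_div hρlt
  -- bound
  have hlt : ((ρ * ‖y‖₊ : ℝ≥0) : ℝ≥0∞) < p.radius := by
    refine lt_of_lt_of_le ?_ h.r_le
    calc ((ρ * ‖y‖₊ : ℝ≥0) : ℝ≥0∞) = (ρ : ℝ≥0∞) * (‖y‖₊ : ℝ≥0∞) := by push_cast; ring
    _ ≤ (ρ : ℝ≥0∞) * (‖y‖₊ + 1) := by gcongr; exact le_self_add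
    _ < r := hρr
  obtain ⟨C, hC0, hC⟩ := p.norm_mul_pow_le_of_lt_radius hlt
  refine ⟨ρ, ?_, hρ0, fun {t} ht => ?_⟩
  · apply FormalMultilinearSeries.le_radius_of_bound _ C
    intro k
    have hb : ‖(lineSeries p y) k‖ ≤ ‖p k‖ * ‖y‖ ^ k := by
      rw [lineSeries, ContinuousMultilinearMap.norm_mkPiRing]
      calc ‖p k (fun _ => y)‖ ≤ ‖p k‖ * ∏ _i : Fin k, ‖y‖ := (p k).le_opNorm _
      _ = ‖p k‖ * ‖y‖ ^ k := by simp
    calc ‖(lineSeries p y) k‖ * (ρ : ℝ) ^ k ≤ (‖p k‖ * ‖y‖ ^ k) * (ρ : ℝ) ^ k := by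
          apply mul_le_mul_of_nonneg_right hb (by positivity)
    _ = ‖p k‖ * ((ρ * ‖y‖₊ : ℝ≥0) : ℝ) ^ k := by push_cast [coe_nnnorm]; ring
    _ ≤ C := hC k
  · -- hasSum
    have hmem : t • y ∈ Metric.eball (0 : E) r := by
      rw [Metric.mem_eball, edist_zero_right] at ht ⊢
      calc (‖t • y‖₊ : ℝ≥0∞) = (‖t‖₊ : ℝ≥0∞) * ‖y‖₊ := by
            rw [nnnorm_smul]; push_cast; ring
      _ ≤ (‖t‖₊ : ℝ≥0∞) * (‖y‖₊ + 1) := by gcongr; exact le_self_add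
      _ < (ρ : ℝ≥0∞) * (‖y‖₊ + 1) := by
            exact ENNReal.mul_lt_mul_left hy1 hy2 ht
      _ < r := hρr
    have hs := h.hasSum hmem
    have heq : ∀ k : ℕ, (lineSeries p y) k (fun _ => t) = p k (fun _ => t • y) := by
      intro k
      rw [lineSeries_apply]
      have := (p k).map_smul_univ (fun _ : Fin k => t) (fun _ => y)
      rw [this]
      simp [smul_eq_mul]
    simp only [zero_add]
    simpa only [heq] using hs

-- Section 4: 1-D order facts
def AnalyticAt.order {F : ℝ → ℝ} {z₀ : ℝ} (_hf : AnalyticAt ℝ F z₀) : ℕ∞ :=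
  analyticOrderAt F z₀

lemma AnalyticAt.order_eq_nat_iff {F : ℝ → ℝ} {z₀ : ℝ} (hf : AnalyticAt ℝ F z₀) (n : ℕ) :
    hf.order = n ↔ ∃ (g : ℝ → ℝ), AnalyticAt ℝ g z₀ ∧ g z₀ ≠ 0 ∧
      ∀ᶠ z in 𝓝 z₀, F z = (z - z₀) ^ n • g z :=
  hf.analyticOrderAt_eq_natCast

lemma AnalyticAt.order_eq_top_iff {F : ℝ → ℝ} {z₀ : ℝ} (hf : AnalyticAt ℝ F z₀) :
    hf.order = ⊤ ↔ ∀ᶠ z in 𝓝 z₀, F z = 0 :=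
  analyticOrderAt_eq_top

lemma order_eq_series_order {F : ℝ → ℝ} {s : FormalMultilinearSeries ℝ ℝ ℝ} {z₀ : ℝ}
    (hf : AnalyticAt ℝ F z₀) (hp : HasFPowerSeriesAt F s z₀) (hs : s ≠ 0) :
    hf.order = (s.order : ℕ∞) := by
  rw [hf.order_eq_nat_iff]
  exact ⟨_, (hp.has_fpower_series_iterate_dslope_fslope s.order).analyticAt,
    hp.iterate_dslope_fslope_ne_zero hs, Filter.Eventually.of_forall hp.eq_pow_order_mul_iterate_dslope⟩

lemma order_eq_top_of_series_zero {F : ℝ → ℝ} {s : FormalMultilinearSeries ℝ ℝ ℝ} {z₀ : ℝ}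
    (hf : AnalyticAt ℝ F z₀) (hp : HasFPowerSeriesAt F s z₀) (hs : s = 0) :
    hf.order = ⊤ :=
  hf.order_eq_top_iff.mpr (hp.locally_zero_iff.mpr hs)

lemma analyticAt_order_mul {F G : ℝ → ℝ} {z₀ : ℝ}
    (hf : AnalyticAt ℝ F z₀) (hg : AnalyticAt ℝ G z₀) :
    (hf.mul hg).order = hf.order + hg.order := by
  rcases eq_or_ne hf.order ⊤ with hft | hft
  · rw [hft, top_add, AnalyticAt.order_eq_top_iff]
    filter_upwards [hf.order_eq_top_iff.mp hft] with z hz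
    simp [hz]
  rcases eq_or_ne hg.order ⊤ with hgt | hgt
  · rw [hgt, add_top, AnalyticAt.order_eq_top_iff]
    filter_upwards [hg.order_eq_top_iff.mp hgt] with z hz
    simp [hz]
  lift hf.order to ℕ using hft with a ha
  lift hg.order to ℕ using hgt with b hb
  obtain ⟨g₁, hg₁, hg₁0, hfe⟩ := (hf.order_eq_nat_iff a).mp ha.symm
  obtain ⟨g₂, hg₂, hg₂0, hge⟩ := (hg.order_eq_nat_iff b).mp hb.symm
  have : (hf.mul hg).order = ((a + b : ℕ) : ℕ∞) := by
    rw [(hf.mul hg).order_eq_nat_iff]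
    refine ⟨fun z => g₁ z * g₂ z, hg₁.mul hg₂, mul_ne_zero hg₁0 hg₂0, ?_⟩
    filter_upwards [hfe, hge] with z h1 h2
    rw [Pi.mul_apply, h1, h2]
    simp [smul_eq_mul, pow_add]
    ring
  rw [this]
  push_cast
  rfl


section Bridge

variable {n : ℕ} {f : (Fin n → ℝ) → ℝ} {x : Fin n → ℝ}

lemma lt_fnOrderAt_iff (f : (Fin n → ℝ) → ℝ) (x : Fin n → ℝ) (m : ℕ) :
    (m : ℕ∞) < fnOrderAt f x ↔ ∀ k ≤ m, iteratedFDeriv ℝ k f x = 0 := by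
  unfold fnOrderAt
  constructor
  · intro H k hk
    by_contra hD
    have hle : sInf {m | ∃ k : ℕ, (k : ℕ∞) = m ∧ iteratedFDeriv ℝ k f x ≠ 0} ≤ (k : ℕ∞) :=
      sInf_le ⟨k, rfl, hD⟩
    have := lt_of_lt_of_le H hle
    exact absurd (Nat.cast_lt.mp this) (by omega)
  · intro H
    have h1 : ((m : ℕ∞) + 1) ≤ sInf {m | ∃ k : ℕ, (k : ℕ∞) = m ∧ iteratedFDeriv ℝ k f x ≠ 0} := by
      apply le_sInf
      rintro b ⟨k, rfl, hD⟩
      by_contra hle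
      push_neg at hle
      have : (k : ℕ∞) < (m : ℕ∞) + 1 := hle
      rw [show ((m : ℕ∞) + 1) = ((m + 1 : ℕ) : ℕ∞) by push_cast; rfl] at this
      exact hD (H k (by exact_mod_cast Nat.lt_succ_iff.mp (Nat.cast_lt.mp this)))
    calc (m : ℕ∞) < (m : ℕ∞) + 1 := by
          exact_mod_cast lt_of_lt_of_le (Nat.lt_succ_self m) (by push_cast; rfl)
    _ ≤ _ := h1

lemma fnOrderAt_le_of_ne {k : ℕ} (hD : iteratedFDeriv ℝ k f x ≠ 0) :
    fnOrderAt f x ≤ (k : ℕ∞) :=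
  sInf_le ⟨k, rfl, hD⟩

lemma iteratedFDeriv_ne_zero_of_fnOrderAt_eq {a : ℕ} (h : fnOrderAt f x = (a : ℕ∞)) :
    iteratedFDeriv ℝ a f x ≠ 0 := by
  intro hD
  have hall : ∀ k ≤ a, iteratedFDeriv ℝ k f x = 0 := by
    intro k hk
    rcases eq_or_lt_of_le hk with rfl | hlt
    · exact hD
    · by_contra hne
      have := fnOrderAt_le_of_ne hne
      rw [h] at this
      exact absurd (Nat.cast_le.mp this) (by omega)
  have := (lt_fnOrderAt_iff f x a).mpr hall
  rw [h] at this
  exact lt_irrefl _ this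

end Bridge

section Bridge2

variable {n : ℕ} {f : (Fin n → ℝ) → ℝ} {x : Fin n → ℝ}
  {p : FormalMultilinearSeries ℝ (Fin n → ℝ) ℝ} {r : ℝ≥0∞}

lemma lt_order_line_iff (hp : HasFPowerSeriesOnBall f p x r) (y : Fin n → ℝ) (m : ℕ) :
    (m : ℕ∞) < ((hasFPowerSeriesAt_line hp y).analyticAt).order ↔
      ∀ k ≤ m, p k (fun _ => y) = 0 := by
  rcases eq_or_ne (lineSeries p y) 0 with h0 | h0
  · rw [order_eq_top_of_series_zero _ (hasFPowerSeriesAt_line hp y) h0]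
    simp only [lt_top_iff_ne_top, ne_eq, ENat.coe_ne_top, not_false_eq_true, true_iff]
    intro k _
    rw [← lineSeries_coeff p y k, h0]
    simp [FormalMultilinearSeries.coeff]
  · rw [order_eq_series_order _ (hasFPowerSeriesAt_line hp y) h0, Nat.cast_lt]
    constructor
    · intro H k hk
      rw [← lineSeries_coeff p y k, FormalMultilinearSeries.coeff,
        FormalMultilinearSeries.apply_eq_zero_of_lt_order (lt_of_le_of_lt hk H)]
      rfl
    · intro H
      by_contra hle
      push_neg at hle
      have := FormalMultilinearSeries.apply_order_ne_zero h0
      apply this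
      have hc := H _ hle
      rw [← lineSeries_coeff p y _] at hc
      exact (FormalMultilinearSeries.coeff_eq_zero).mp hc

lemma lt_fnOrderAt_iff_line (hp : HasFPowerSeriesOnBall f p x r) (m : ℕ) :
    (m : ℕ∞) < fnOrderAt f x ↔
      ∀ y, (m : ℕ∞) < ((hasFPowerSeriesAt_line hp y).analyticAt).order := by
  rw [lt_fnOrderAt_iff]
  constructor
  · intro H y
    rw [lt_order_line_iff hp y m]
    intro k hk
    exact diag_coeff_eq_zero_of_iteratedFDeriv_eq_zero hp (H k hk) y
  · intro H
    exact fun k hk =>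
      iteratedFDeriv_eq_zero_of_diag_eq_zero hp
        (fun j hj y => (lt_order_line_iff hp y m).mp (H y) j hj) k hk

lemma fnOrderAt_le_order_line (hp : HasFPowerSeriesOnBall f p x r) (y : Fin n → ℝ) :
    fnOrderAt f x ≤ ((hasFPowerSeriesAt_line hp y).analyticAt).order :=
  enat_le_of_forall_lt fun m hm => ((lt_fnOrderAt_iff_line hp m).mp hm) y

end Bridge2

section Additivity

variable {n : ℕ} {f g : (Fin n → ℝ) → ℝ} {x : Fin n → ℝ}
  {p : FormalMultilinearSeries ℝ (Fin n → ℝ) ℝ} {r : ℝ≥0∞}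

lemma order_line_eq_iff (hp : HasFPowerSeriesOnBall f p x r) {α : ℕ}
    (ha : fnOrderAt f x = (α : ℕ∞)) (y : Fin n → ℝ) :
    ((hasFPowerSeriesAt_line hp y).analyticAt).order = (α : ℕ∞) ↔
      p α (fun _ => y) ≠ 0 := by
  constructor
  · intro h h0
    have hall : ∀ k ≤ α, p k (fun _ => y) = 0 := by
      intro k hk
      rcases eq_or_lt_of_le hk with rfl | hlt
      · exact h0
      · have hlt' : (k : ℕ∞) < fnOrderAt f x := by rw [ha]; exact_mod_cast hlt
        have hD := (lt_fnOrderAt_iff f x k).mp hlt' k le_rfl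
        exact diag_coeff_eq_zero_of_iteratedFDeriv_eq_zero hp hD y
    have := (lt_order_line_iff hp y α).mpr hall
    rw [h] at this
    exact lt_irrefl _ this
  · intro hne
    have hsne : lineSeries p y α ≠ 0 := by
      intro hz
      apply hne
      rw [← lineSeries_coeff p y α, FormalMultilinearSeries.coeff, hz]
      rfl
    have hs0 : lineSeries p y ≠ 0 := by
      intro hz; rw [hz] at hsne; exact hsne rfl
    have horder : ((hasFPowerSeriesAt_line hp y).analyticAt).order
        = ((lineSeries p y).order : ℕ∞) :=
      order_eq_series_order _ (hasFPowerSeriesAt_line hp y) hs0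
    have hle : (lineSeries p y).order ≤ α := Nat.sInf_le hsne
    have hge : (α : ℕ∞) ≤ ((lineSeries p y).order : ℕ∞) := by
      rw [← horder, ← ha]
      exact fnOrderAt_le_order_line hp y
    rw [horder]
    exact le_antisymm (by exact_mod_cast hle) hge

lemma fnOrderAt_mul_eq (hf : AnalyticAt ℝ f x) (hg : AnalyticAt ℝ g x) :
    fnOrderAt (fun y => f y * g y) x = fnOrderAt f x + fnOrderAt g x := by
  obtain ⟨ws, hws⟩ := hf.mul hg
  obtain ⟨rw3, hw⟩ := hws
  obtain ⟨ps, hps⟩ := hf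
  obtain ⟨rp, hp⟩ := hps
  obtain ⟨qs, hqs⟩ := hg
  obtain ⟨rq, hq⟩ := hqs
  -- order of line restrictions multiply
  have hordmul : ∀ y : Fin n → ℝ,
      ((hasFPowerSeriesAt_line hw y).analyticAt).order =
        ((hasFPowerSeriesAt_line hp y).analyticAt).order +
          ((hasFPowerSeriesAt_line hq y).analyticAt).order := by
    intro y
    have h1 : ((hasFPowerSeriesAt_line hw y).analyticAt).order =
        (((hasFPowerSeriesAt_line hp y).analyticAt).mul
          ((hasFPowerSeriesAt_line hq y).analyticAt)).order := rfl
    rw [h1, analyticAt_order_mul]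
  have hgeq : fnOrderAt f x + fnOrderAt g x ≤ fnOrderAt (fun y => f y * g y) x := by
    apply enat_le_of_forall_lt
    intro m hm
    rw [lt_fnOrderAt_iff_line (f := fun y => f y * g y) hw]
    intro y
    calc (m : ℕ∞) < fnOrderAt f x + fnOrderAt g x := hm
    _ ≤ _ + _ := add_le_add (fnOrderAt_le_order_line hp y) (fnOrderAt_le_order_line hq y)
    _ = _ := (hordmul y).symm
  refine le_antisymm ?_ hgeq
  rcases eq_or_ne (fnOrderAt f x) ⊤ with ha | ha
  · rw [ha, top_add]; exact le_top
  rcases eq_or_ne (fnOrderAt g x) ⊤ with hb | hb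
  · rw [hb, add_top]; exact le_top
  lift fnOrderAt f x to ℕ using ha with α hα
  lift fnOrderAt g x to ℕ using hb with β hβ
  -- find witnesses
  have hex1 : ∃ y, ps α (fun _ => y) ≠ 0 := by
    by_contra hno
    push_neg at hno
    have : ∀ y, (α : ℕ∞) < ((hasFPowerSeriesAt_line hp y).analyticAt).order := by
      intro y
      have hlt := lt_of_le_of_ne (hα ▸ fnOrderAt_le_order_line hp y) ?_
      · exact hlt
      · intro heq
        exact ((order_line_eq_iff hp hα.symm y).mp heq.symm) (hno y)
    have := (lt_fnOrderAt_iff_line hp α).mpr this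
    rw [← hα] at this
    exact lt_irrefl _ this
  have hex2 : ∃ y, qs β (fun _ => y) ≠ 0 := by
    by_contra hno
    push_neg at hno
    have : ∀ y, (β : ℕ∞) < ((hasFPowerSeriesAt_line hq y).analyticAt).order := by
      intro y
      have hlt := lt_of_le_of_ne (hβ ▸ fnOrderAt_le_order_line hq y) ?_
      · exact hlt
      · intro heq
        exact ((order_line_eq_iff hq hβ.symm y).mp heq.symm) (hno y)
    have := (lt_fnOrderAt_iff_line hq β).mpr this
    rw [← hβ] at this
    exact lt_irrefl _ this
  obtain ⟨y₁, hy₁⟩ := hex1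
  obtain ⟨y₂, hy₂⟩ := hex2
  -- common witness via 1-D identity theorem
  set yfun : ℝ → (Fin n → ℝ) := fun t => y₁ + t • (y₂ - y₁) with hyfun
  have hyfun_an : ∀ t₀ : ℝ, AnalyticAt ℝ yfun t₀ := by
    intro t₀
    apply analyticAt_const.add
    exact (ContinuousLinearMap.smulRight (ContinuousLinearMap.id ℝ ℝ) (y₂ - y₁)).analyticAt t₀
  have hdiag_an : ∀ (k : ℕ) (M : ContinuousMultilinearMap ℝ
      (fun _ : Fin k => (Fin n → ℝ)) ℝ) (t₀ : ℝ),
      AnalyticAt ℝ (fun t => M (fun _ => yfun t)) t₀ := by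
    intro k M t₀
    have h1 : AnalyticAt ℝ (⇑M) (fun _ => yfun t₀) := (M.cpolynomialAt).analyticAt
    have h2 : AnalyticAt ℝ (fun t : ℝ => (fun _ : Fin k => yfun t)) t₀ :=
      AnalyticAt.pi (fun _ => hyfun_an t₀)
    exact h1.comp h2
  have hA : AnalyticOnNhd ℝ (fun t => ps α (fun _ => yfun t)) Set.univ :=
    fun t₀ _ => hdiag_an α (ps α) t₀
  have hB : AnalyticOnNhd ℝ (fun t => qs β (fun _ => yfun t)) Set.univ :=
    fun t₀ _ => hdiag_an β (qs β) t₀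
  have hA0 : ps α (fun _ => yfun 0) ≠ 0 := by
    simpa [hyfun] using hy₁
  have hB1 : qs β (fun _ => yfun 1) ≠ 0 := by
    have : yfun 1 = y₂ := by simp [hyfun]
    rw [this]
    exact hy₂
  obtain ⟨t₀, hBt₀, hAt₀⟩ : ∃ t₀ : ℝ, qs β (fun _ => yfun t₀) ≠ 0 ∧
      ps α (fun _ => yfun t₀) ≠ 0 := by
    rcases (hB 0 (Set.mem_univ 0)).eventually_eq_zero_or_eventually_ne_zero with hBz | hBnz
    · exact absurd (hB.eqOn_zero_of_preconnected_of_eventuallyEq_zero isPreconnected_univ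
        (Set.mem_univ 0) hBz (Set.mem_univ 1)) hB1
    · have hAnz : ∀ᶠ t in 𝓝 (0:ℝ), ps α (fun _ => yfun t) ≠ 0 :=
        (hA 0 (Set.mem_univ 0)).continuousAt.eventually_ne hA0
      exact (hBnz.and (hAnz.filter_mono nhdsWithin_le_nhds)).exists
  set y := yfun t₀
  have hordF : ((hasFPowerSeriesAt_line hp y).analyticAt).order = (α : ℕ∞) :=
    (order_line_eq_iff hp hα.symm y).mpr hAt₀
  have hordG : ((hasFPowerSeriesAt_line hq y).analyticAt).order = (β : ℕ∞) :=
    (order_line_eq_iff hq hβ.symm y).mpr hBt₀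
  calc fnOrderAt (fun y => f y * g y) x
      ≤ ((hasFPowerSeriesAt_line hw y).analyticAt).order := fnOrderAt_le_order_line hw y
  _ = (α : ℕ∞) + (β : ℕ∞) := by rw [hordmul y, hordF, hordG]

end Additivity

section Assembly

variable {n : ℕ}

theorem main'
    (U : Set (Fin n → ℝ)) (hU : IsOpen U)
    (f g : (Fin n → ℝ) → ℝ)
    (hf : AnalyticOnNhd ℝ f U) (hg : AnalyticOnNhd ℝ g U)
    (S : Set (Fin n → ℝ)) (hSU : S ⊆ U) (hS : IsConnected S)
    (hconst : ∃ c : ℕ, ∀ x ∈ S, fnOrderAt (fun y => f y * g y) x = (c : ℕ∞)) :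
    (∀ x ∈ S, ∀ y ∈ S, fnOrderAt f x = fnOrderAt f y) ∧
    (∀ x ∈ S, ∀ y ∈ S, fnOrderAt g x = fnOrderAt g y) := by
  obtain ⟨c, hc⟩ := hconst
  -- local constancy
  have hloc : ∀ x ∈ S, ∃ O : Set (Fin n → ℝ), IsOpen O ∧ x ∈ O ∧
      ∀ z ∈ O ∩ S, fnOrderAt f z = fnOrderAt f x ∧ fnOrderAt g z = fnOrderAt g x := by
    intro x hx
    have hfa : AnalyticAt ℝ f x := hf x (hSU hx)
    have hga : AnalyticAt ℝ g x := hg x (hSU hx)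
    have hsum : fnOrderAt f x + fnOrderAt g x = (c : ℕ∞) := by
      rw [← fnOrderAt_mul_eq hfa hga]
      exact hc x hx
    have hfx_ne : fnOrderAt f x ≠ ⊤ := by
      intro h; rw [h, top_add] at hsum; exact (ENat.top_ne_coe c) hsum
    have hgx_ne : fnOrderAt g x ≠ ⊤ := by
      intro h; rw [h, add_top] at hsum; exact (ENat.top_ne_coe c) hsum
    obtain ⟨α, hα⟩ : ∃ α : ℕ, fnOrderAt f x = (α : ℕ∞) := by
      lift fnOrderAt f x to ℕ using hfx_ne with α hα
      exact ⟨α, rfl⟩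
    obtain ⟨β, hβ⟩ : ∃ β : ℕ, fnOrderAt g x = (β : ℕ∞) := by
      lift fnOrderAt g x to ℕ using hgx_ne with β hβ
      exact ⟨β, rfl⟩
    rw [hα, hβ] at hsum
    have hαβ : α + β = c := by exact_mod_cast hsum
    have hDf : iteratedFDeriv ℝ α f x ≠ 0 := iteratedFDeriv_ne_zero_of_fnOrderAt_eq hα
    have hDg : iteratedFDeriv ℝ β g x ≠ 0 := iteratedFDeriv_ne_zero_of_fnOrderAt_eq hβ
    have hcf : ContinuousAt (iteratedFDeriv ℝ α f) x :=
      ((hf.iteratedFDeriv α) x (hSU hx)).continuousAt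
    have hcg : ContinuousAt (iteratedFDeriv ℝ β g) x :=
      ((hg.iteratedFDeriv β) x (hSU hx)).continuousAt
    have hev : ∀ᶠ z in 𝓝 x, iteratedFDeriv ℝ α f z ≠ 0 ∧ iteratedFDeriv ℝ β g z ≠ 0 ∧
        z ∈ U :=
      (hcf.eventually_ne hDf).and ((hcg.eventually_ne hDg).and (hU.mem_nhds (hSU hx)))
    obtain ⟨O, hO1, hO2, hO3⟩ := eventually_nhds_iff.mp hev
    refine ⟨O, hO2, hO3, ?_⟩
    rintro z ⟨hzO, hzS⟩
    obtain ⟨hz1, hz2, hz3⟩ := hO1 z hzO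
    have hsumz : fnOrderAt f z + fnOrderAt g z = (c : ℕ∞) := by
      rw [← fnOrderAt_mul_eq (hf z hz3) (hg z hz3)]
      exact hc z hzS
    have hlef : fnOrderAt f z ≤ (α : ℕ∞) := fnOrderAt_le_of_ne hz1
    have hleg : fnOrderAt g z ≤ (β : ℕ∞) := fnOrderAt_le_of_ne hz2
    obtain ⟨α', hα'⟩ : ∃ α' : ℕ, fnOrderAt f z = (α' : ℕ∞) := by
      have hne : fnOrderAt f z ≠ ⊤ := by
        intro h; rw [h, top_add] at hsumz; exact (ENat.top_ne_coe c) hsumz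
      lift fnOrderAt f z to ℕ using hne with α' hα'
      exact ⟨α', rfl⟩
    obtain ⟨β', hβ'⟩ : ∃ β' : ℕ, fnOrderAt g z = (β' : ℕ∞) := by
      have hne : fnOrderAt g z ≠ ⊤ := by
        intro h; rw [h, add_top] at hsumz; exact (ENat.top_ne_coe c) hsumz
      lift fnOrderAt g z to ℕ using hne with β' hβ'
      exact ⟨β', rfl⟩
    rw [hα'] at hsumz hlef
    rw [hβ'] at hsumz hleg
    rw [hα', hβ', hα, hβ]
    have e1 : α' + β' = c := by exact_mod_cast hsumz
    have e2 : α' ≤ α := by exact_mod_cast hlef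
    have e3 : β' ≤ β := by exact_mod_cast hleg
    have h4 : α' = α := by omega
    have h5 : β' = β := by omega
    rw [h4, h5]
    exact ⟨rfl, rfl⟩
  choose O hOopen hOmem hOconst using hloc
  -- connectedness argument
  set P : (Fin n → ℝ) → ℕ∞ × ℕ∞ := fun z => (fnOrderAt f z, fnOrderAt g z) with hP
  have key : ∀ x ∈ S, ∀ y ∈ S, P x = P y := by
    intro x hx y hy
    by_contra hPne
    classical
    set A : Set (Fin n → ℝ) := ⋃ z : {w // w ∈ S ∧ P w = P x}, O z.1 z.2.1 with hA
    set B : Set (Fin n → ℝ) := ⋃ z : {w // w ∈ S ∧ P w ≠ P x}, O z.1 z.2.1 with hB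
    have hAopen : IsOpen A := isOpen_iUnion fun z => hOopen z.1 z.2.1
    have hBopen : IsOpen B := isOpen_iUnion fun z => hOopen z.1 z.2.1
    have hcover : S ⊆ A ∪ B := by
      intro z hz
      by_cases hPz : P z = P x
      · exact Or.inl (Set.mem_iUnion.mpr ⟨⟨z, hz, hPz⟩, hOmem z hz⟩)
      · exact Or.inr (Set.mem_iUnion.mpr ⟨⟨z, hz, hPz⟩, hOmem z hz⟩)
    have hxA : x ∈ S ∩ A := ⟨hx, Set.mem_iUnion.mpr ⟨⟨x, hx, rfl⟩, hOmem x hx⟩⟩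
    have hyB : y ∈ S ∩ B := ⟨hy, Set.mem_iUnion.mpr ⟨⟨y, hy, fun h => hPne h.symm⟩,
      hOmem y hy⟩⟩
    obtain ⟨w, hwS, hwA, hwB⟩ := hS.isPreconnected A B hAopen hBopen hcover
      ⟨x, hxA⟩ ⟨y, hyB⟩
    obtain ⟨z₁, hwz₁⟩ := Set.mem_iUnion.mp hwA
    obtain ⟨z₂, hwz₂⟩ := Set.mem_iUnion.mp hwB
    have h1 := hOconst z₁.1 z₁.2.1 w ⟨hwz₁, hwS⟩
    have h2 := hOconst z₂.1 z₂.2.1 w ⟨hwz₂, hwS⟩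
    have hPw1 : P w = P z₁.1 := by
      simp only [hP, Prod.mk.injEq]
      exact ⟨h1.1, h1.2⟩
    have hPw2 : P w = P z₂.1 := by
      simp only [hP, Prod.mk.injEq]
      exact ⟨h2.1, h2.2⟩
    exact z₂.2.2 (by rw [← hPw2, hPw1, z₁.2.2])
  constructor
  · intro x hx y hy
    have := key x hx y hy
    exact congrArg Prod.fst this
  · intro x hx y hy
    have := key x hx y hy
    exact congrArg Prod.snd this

end Assembly

end AuxOrderLemmas

/-- Let `U ⊆ ℝⁿ` be open, `f, g` real-analytic on `U`, and
`S ⊆ U` connected.  If the order of the pointwise product `f·g` is finite and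
takes the same value at every point of `S`, then the order of `f` takes the
same value at every point of `S`, and likewise for `g`. -/
theorem factor_orders_constant_of_product_order_constant
    (n : ℕ) (U : Set (Fin n → ℝ)) (hU : IsOpen U)
    (f g : (Fin n → ℝ) → ℝ)
    (hf : AnalyticOnNhd ℝ f U) (hg : AnalyticOnNhd ℝ g U)
    (S : Set (Fin n → ℝ)) (hSU : S ⊆ U) (hS : IsConnected S)
    (hconst : ∃ c : ℕ, ∀ x ∈ S, fnOrderAt (fun y => f y * g y) x = (c : ℕ∞)) :
    (∀ x ∈ S, ∀ y ∈ S, fnOrderAt f x = fnOrderAt f y) ∧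
    (∀ x ∈ S, ∀ y ∈ S, fnOrderAt g x = fnOrderAt g y) :=
  main' U hU f g hf hg S hSU hS hconst
end
end
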